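/- arXiv:2603.29367 — 5 statements merged into one kernel-verified Lean document; each statement's English description precedes it below -/
import Mathlib

section
/- Let g = (A, C, δ) be a dataflow (marked) graph, x : A → {0,1} a configuration, and (σ, P) a feasible periodic schedule for x. Let a_0, a_1, …, a_{k−1} (k ≥ 1) be actors such that (a_i, a_{(i+1) mod k}) ∈ C for every i < k (a directed cycle of g). Then P · Σ_{i<k} δ(a_i, a_{(i+1) mod k}) ≥ Σ_{i<k} ( τ(a_i) + x(a_i) · w(a_i) ). -/
/-- Feasible periodic schedule `(σ, P)` for configuration `x` on the marked graph
with channels `C` and initial tokens `δ`. -/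
def IsSchedule {A : Type*} (C : Set (A × A)) (δ : A × A → ℕ)
    (τ w s : A → ℚ) (x : A → ℚ) (σ : A → ℚ) (P : ℚ) : Prop :=
  (∀ a : A, τ a + x a * (w a + s a) ≤ P) ∧
  (∀ a b : A, (a, b) ∈ C → σ a + τ a + x a * w a ≤ σ b + (δ (a, b) : ℚ) * P)

/-- A period `P` is feasible for configuration `x` if some start-time vector works. -/
def FeasiblePeriod {A : Type*} (C : Set (A × A)) (δ : A × A → ℕ)
    (τ w s : A → ℚ) (x : A → ℚ) (P : ℚ) : Prop :=
  ∃ σ : A → ℚ, IsSchedule C δ τ w s x σ P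

/-- A configuration assigns `0` (always-active) or `1` (self-powered) to each actor. -/
def IsConfig {A : Type*} (x : A → ℚ) : Prop := ∀ a, x a = 0 ∨ x a = 1

/-- Total energy per period: `p` execution power, `idl` idle power, `wkp` wake-up power,
`shd` shutdown power, `slp` sleep power. -/
def Etot {A : Type*} [Fintype A] (τ w s p idl wkp shd slp : A → ℚ)
    (x : A → ℚ) (P : ℚ) : ℚ :=
  ∑ a : A, ((1 - x a) * (p a * τ a + idl a * (P - τ a)) +
    x a * (wkp a * w a + p a * τ a + shd a * s a + slp a * (P - w a - τ a - s a)))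

/-- `(P₁, E₁)` dominates `(P₂, E₂)` if it is coordinatewise `≤` and distinct. -/
def Dominates (q r : ℚ × ℚ) : Prop := q.1 ≤ r.1 ∧ q.2 ≤ r.2 ∧ q ≠ r

/-- A point of `T` is Pareto-optimal in `T` if no other point of `T` dominates it. -/
def ParetoOptimal (T : Set (ℚ × ℚ)) (r : ℚ × ℚ) : Prop :=
  r ∈ T ∧ ∀ q ∈ T, ¬ Dominates q r


lemma rot_sum' {M : Type*} [AddCommMonoid M] (k : ℕ) (hk : 1 ≤ k) (f : ℕ → M) :
    ∑ i ∈ Finset.range k, f ((i + 1) % k) = ∑ i ∈ Finset.range k, f i := by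
  have hk0 : 0 < k := hk
  refine Finset.sum_nbij' (fun i => (i + 1) % k) (fun i => (i + (k - 1)) % k) ?_ ?_ ?_ ?_ ?_
  · intro i hi; exact Finset.mem_range.2 (Nat.mod_lt _ hk0)
  · intro i hi; exact Finset.mem_range.2 (Nat.mod_lt _ hk0)
  · intro i hi
    have hi' := Finset.mem_range.1 hi
    show ((i + 1) % k + (k - 1)) % k = i
    rcases Nat.lt_or_ge (i + 1) k with h | h
    · rw [Nat.mod_eq_of_lt h]
      have : i + 1 + (k - 1) = i + k := by omega
      rw [this, Nat.add_mod_right, Nat.mod_eq_of_lt hi']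
    · have hik : i + 1 = k := by omega
      subst hik
      simp [Nat.mod_eq_of_lt hi']
  · intro i hi
    have hi' := Finset.mem_range.1 hi
    show ((i + (k - 1)) % k + 1) % k = i
    rcases Nat.lt_or_ge (i + (k - 1)) k with h | h
    · rw [Nat.mod_eq_of_lt h]
      have : i + (k - 1) + 1 = i + k := by omega
      rw [this, Nat.add_mod_right, Nat.mod_eq_of_lt hi']
    · have h2 : (i + (k - 1)) % k = i + (k - 1) - k := by
        rw [Nat.mod_eq_sub_mod h, Nat.mod_eq_of_lt]; omega
      rw [h2]
      have : i + (k - 1) - k + 1 = i := by omega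
      rw [this, Nat.mod_eq_of_lt hi']
  · intro i hi; rfl

/-- along any directed cycle of the graph,
`P · Σ δ ≥ Σ (τ + x·w)` for any feasible periodic schedule `(σ, P)`. -/
theorem cycle_period_times_tokens_ge_cycle_delay
    {A : Type*} (C : Set (A × A)) (δ : A × A → ℕ) (τ w s : A → ℚ)
    (hτ : ∀ a, 0 ≤ τ a) (hw : ∀ a, 0 ≤ w a) (hs : ∀ a, 0 ≤ s a)
    (x : A → ℚ) (hx : IsConfig x)
    (σ : A → ℚ) (P : ℚ) (hsch : IsSchedule C δ τ w s x σ P)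
    (k : ℕ) (hk : 1 ≤ k) (a : ℕ → A)
    (hcyc : ∀ i < k, (a i, a ((i + 1) % k)) ∈ C) :
    ∑ i ∈ Finset.range k, (τ (a i) + x (a i) * w (a i)) ≤
      P * ∑ i ∈ Finset.range k, (δ (a i, a ((i + 1) % k)) : ℚ) := by
  obtain ⟨-, hs2⟩ := hsch
  have key : ∑ i ∈ Finset.range k, (σ (a i) + τ (a i) + x (a i) * w (a i)) ≤
      ∑ i ∈ Finset.range k, (σ (a ((i + 1) % k)) + (δ (a i, a ((i + 1) % k)) : ℚ) * P) :=
    Finset.sum_le_sum fun i hi => hs2 _ _ (hcyc i (Finset.mem_range.1 hi))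
  have hrot : ∑ i ∈ Finset.range k, σ (a ((i + 1) % k)) = ∑ i ∈ Finset.range k, σ (a i) :=
    rot_sum' k hk (fun i => σ (a i))
  have h1 : ∑ i ∈ Finset.range k, (σ (a i) + τ (a i) + x (a i) * w (a i)) =
      (∑ i ∈ Finset.range k, σ (a i)) + ∑ i ∈ Finset.range k, (τ (a i) + x (a i) * w (a i)) := by
    rw [← Finset.sum_add_distrib]; congr 1; ext i; ring
  have h2 : ∑ i ∈ Finset.range k, (σ (a ((i + 1) % k)) + (δ (a i, a ((i + 1) % k)) : ℚ) * P) =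
      (∑ i ∈ Finset.range k, σ (a i)) + P * ∑ i ∈ Finset.range k, (δ (a i, a ((i + 1) % k)) : ℚ) := by
    rw [Finset.sum_add_distrib, hrot, Finset.mul_sum]
    congr 1; exact Finset.sum_congr rfl fun i _ => mul_comm _ _
  rw [h1, h2] at key
  linarith
end

section
/- Let g = (A, C, δ) be a dataflow (marked) graph, x : A → {0,1} a configuration, and (σ, P) a feasible periodic schedule for x. Let a_0, a_1, …, a_{k−1} (k ≥ 1) be actors such that (a_i, a_{(i+1) mod k}) ∈ C for every i < k, and suppose the total token count Δ = Σ_{i<k} δ(a_i, a_{(i+1) mod k}) is positive. Then P ≥ ( Σ_{i<k} ( τ(a_i) + x(a_i) · w(a_i) ) ) / Δ. In particular, for the all-always-active configuration x = 0, every feasible period is at least the cycle mean ( Σ_{i<k} τ(a_i) ) / Δ of this cycle. -/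
/-- on a directed cycle with positive total token count `Δ`,
any feasible period satisfies `P ≥ (Σ (τ + x·w)) / Δ`; in particular, for the
all-always-active configuration `x = 0`, `P` is at least the cycle mean `(Σ τ) / Δ`. -/
theorem period_ge_cycle_mean
    {A : Type*} (C : Set (A × A)) (δ : A × A → ℕ) (τ w s : A → ℚ)
    (hτ : ∀ a, 0 ≤ τ a) (hw : ∀ a, 0 ≤ w a) (hs : ∀ a, 0 ≤ s a)
    (x : A → ℚ) (hx : IsConfig x)
    (σ : A → ℚ) (P : ℚ) (hsch : IsSchedule C δ τ w s x σ P)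
    (k : ℕ) (hk : 1 ≤ k) (a : ℕ → A)
    (hcyc : ∀ i < k, (a i, a ((i + 1) % k)) ∈ C)
    (hΔ : 0 < ∑ i ∈ Finset.range k, (δ (a i, a ((i + 1) % k)) : ℚ)) :
    (∑ i ∈ Finset.range k, (τ (a i) + x (a i) * w (a i))) /
        (∑ i ∈ Finset.range k, (δ (a i, a ((i + 1) % k)) : ℚ)) ≤ P ∧
    ((∀ b, x b = 0) →
      (∑ i ∈ Finset.range k, τ (a i)) /
          (∑ i ∈ Finset.range k, (δ (a i, a ((i + 1) % k)) : ℚ)) ≤ P) := by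
  obtain ⟨hP, hC⟩ := hsch
  have hbij : ∀ f : A → ℚ, ∑ i ∈ Finset.range k, f (a ((i + 1) % k))
      = ∑ i ∈ Finset.range k, f (a i) := by
    intro f
    refine Finset.sum_nbij' (fun i => (i + 1) % k) (fun j => (j + (k - 1)) % k)
      ?_ ?_ ?_ ?_ ?_
    · intro i hi
      exact Finset.mem_range.mpr (Nat.mod_lt _ (by omega))
    · intro j hj
      exact Finset.mem_range.mpr (Nat.mod_lt _ (by omega))
    · intro i hi
      simp only [Finset.mem_range] at hi
      show ((i + 1) % k + (k - 1)) % k = i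
      rcases Nat.lt_or_ge (i + 1) k with h | h
      · rw [Nat.mod_eq_of_lt h]
        have h2 : i + 1 + (k - 1) = i + k := by omega
        rw [h2, Nat.add_mod_right, Nat.mod_eq_of_lt hi]
      · have h1 : i + 1 = k := by omega
        rw [h1, Nat.mod_self, Nat.zero_add, Nat.mod_eq_of_lt (by omega)]
        omega
    · intro j hj
      simp only [Finset.mem_range] at hj
      show ((j + (k - 1)) % k + 1) % k = j
      rcases Nat.eq_zero_or_pos j with h | h
      · subst h
        have h1 : (k - 1) % k = k - 1 := Nat.mod_eq_of_lt (by omega)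
        rw [Nat.zero_add, h1, show k - 1 + 1 = k by omega, Nat.mod_self]
      · have h2 : j + (k - 1) = (j - 1) + k := by omega
        have h4 : (j - 1) % k = j - 1 := Nat.mod_eq_of_lt (by omega)
        rw [h2, Nat.add_mod_right, h4, show j - 1 + 1 = j by omega,
          Nat.mod_eq_of_lt hj]
    · intro i hi; rfl
  have hsum : ∑ i ∈ Finset.range k, (σ (a i) + τ (a i) + x (a i) * w (a i))
      ≤ ∑ i ∈ Finset.range k,
        (σ (a ((i + 1) % k)) + (δ (a i, a ((i + 1) % k)) : ℚ) * P) := by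
    refine Finset.sum_le_sum fun i hi => ?_
    exact hC _ _ (hcyc i (Finset.mem_range.mp hi))
  have e1 : ∑ i ∈ Finset.range k, (σ (a i) + τ (a i) + x (a i) * w (a i))
      = (∑ i ∈ Finset.range k, σ (a i))
        + ∑ i ∈ Finset.range k, (τ (a i) + x (a i) * w (a i)) := by
    rw [← Finset.sum_add_distrib]
    exact Finset.sum_congr rfl fun i _ => by ring
  have e2 : ∑ i ∈ Finset.range k,
        (σ (a ((i + 1) % k)) + (δ (a i, a ((i + 1) % k)) : ℚ) * P)
      = (∑ i ∈ Finset.range k, σ (a i))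
        + (∑ i ∈ Finset.range k, (δ (a i, a ((i + 1) % k)) : ℚ)) * P := by
    rw [Finset.sum_add_distrib, hbij σ, Finset.sum_mul]
  have key : ∑ i ∈ Finset.range k, (τ (a i) + x (a i) * w (a i))
      ≤ (∑ i ∈ Finset.range k, (δ (a i, a ((i + 1) % k)) : ℚ)) * P := by
    rw [e1, e2] at hsum; linarith
  constructor
  · rw [div_le_iff₀ hΔ]
    linarith
  · intro hb
    rw [div_le_iff₀ hΔ]
    have e3 : ∑ i ∈ Finset.range k, τ (a i)
        = ∑ i ∈ Finset.range k, (τ (a i) + x (a i) * w (a i)) :=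
      Finset.sum_congr rfl fun i _ => by rw [hb]; ring
    rw [e3]; linarith
end

section
/- Pareto-optimal points attain the minimal period of their configuration: assume A is nonempty, I(a) > 0 and S(a) > 0 for every actor a, and define the objective space S = { (P, E(P, x)) : x a configuration, P a feasible period for x }. If (P, E(P, x)) is Pareto-optimal in S, where P is a feasible period for the configuration x, then P ≤ Q for every feasible period Q of x, i.e., P is the minimal feasible period of x. -/
/-- Pareto-optimal points of the objective space attain the minimal
feasible period of their configuration. -/
theorem pareto_optimal_attains_min_period
    {A : Type*} [Fintype A] (C : Set (A × A)) (δ : A × A → ℕ)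
    (τ w s p idl wkp shd slp : A → ℚ)
    (hτ : ∀ a, 0 ≤ τ a) (hw : ∀ a, 0 ≤ w a) (hs : ∀ a, 0 ≤ s a)
    (hp : ∀ a, 0 ≤ p a) (hwkp : ∀ a, 0 ≤ wkp a) (hshd : ∀ a, 0 ≤ shd a)
    (hne : Nonempty A) (hidl : ∀ a, 0 < idl a) (hslp : ∀ a, 0 < slp a)
    (x : A → ℚ) (hx : IsConfig x)
    (P : ℚ) (hP : FeasiblePeriod C δ τ w s x P)
    (hpar : ParetoOptimal
      {pt : ℚ × ℚ | ∃ (y : A → ℚ) (Q : ℚ), IsConfig y ∧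
        FeasiblePeriod C δ τ w s y Q ∧ pt = (Q, Etot τ w s p idl wkp shd slp y Q)}
      (P, Etot τ w s p idl wkp shd slp x P)) :
    ∀ Q : ℚ, FeasiblePeriod C δ τ w s x Q → P ≤ Q := by
  intro Q hQ
  by_contra h
  push_neg at h
  have hEmono : Etot τ w s p idl wkp shd slp x Q ≤ Etot τ w s p idl wkp shd slp x P := by
    unfold Etot
    apply Finset.sum_le_sum
    intro a _
    rcases hx a with h0 | h1
    · rw [h0]
      have := (hidl a).le
      nlinarith [h.le]
    · rw [h1]
      have := (hslp a).le
      nlinarith [h.le]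
  exact hpar.2 (Q, Etot τ w s p idl wkp shd slp x Q)
    ⟨x, Q, hx, hQ, rfl⟩
    ⟨h.le, hEmono, fun hq => absurd (congrArg Prod.fst hq) (ne_of_lt h)⟩
end

section
/- First inclusion of the Pareto-front theorem: assume A is nonempty, I(a) > 0 and S(a) > 0 for every actor a, and assume every configuration x has a minimal feasible period Pmin(x) (Pmin(x) is feasible for x and every feasible period of x is ≥ Pmin(x)). Define the objective space S = { (P, E(P, x)) : x a configuration, P a feasible period for x } and the explored set EP = { (Pmin(x), E(Pmin(x), x)) : x a configuration }. Then every Pareto-optimal point of S belongs to EP. -/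
/-- first inclusion of the Pareto-front theorem — every Pareto-optimal
point of the objective space `S` belongs to the explored set `EP` of the
decision-variable sweep. -/
theorem pareto_front_subset_explored
    {A : Type*} [Fintype A] (C : Set (A × A)) (δ : A × A → ℕ)
    (τ w s p idl wkp shd slp : A → ℚ)
    (hτ : ∀ a, 0 ≤ τ a) (hw : ∀ a, 0 ≤ w a) (hs : ∀ a, 0 ≤ s a)
    (hp : ∀ a, 0 ≤ p a) (hwkp : ∀ a, 0 ≤ wkp a) (hshd : ∀ a, 0 ≤ shd a)
    (hne : Nonempty A) (hidl : ∀ a, 0 < idl a) (hslp : ∀ a, 0 < slp a)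
    (Pmin : (A → ℚ) → ℚ)
    (hPmin : ∀ x : A → ℚ, IsConfig x →
      FeasiblePeriod C δ τ w s x (Pmin x) ∧
      ∀ P : ℚ, FeasiblePeriod C δ τ w s x P → Pmin x ≤ P) :
    ∀ pt : ℚ × ℚ,
      ParetoOptimal
        {q : ℚ × ℚ | ∃ (y : A → ℚ) (Q : ℚ), IsConfig y ∧
          FeasiblePeriod C δ τ w s y Q ∧ q = (Q, Etot τ w s p idl wkp shd slp y Q)}
        pt →
      pt ∈ {q : ℚ × ℚ | ∃ y : A → ℚ, IsConfig y ∧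
        q = (Pmin y, Etot τ w s p idl wkp shd slp y (Pmin y))} := by

  rintro pt ⟨⟨x, Q, hx, hQ, rfl⟩, hpar⟩
  obtain ⟨hfeas, hmin⟩ := hPmin x hx
  have hle : Pmin x ≤ Q := hmin Q hQ
  have hE : Etot τ w s p idl wkp shd slp x (Pmin x) ≤
      Etot τ w s p idl wkp shd slp x Q := by
    unfold Etot
    apply Finset.sum_le_sum
    intro a _
    rcases hx a with h | h <;> simp only [h] <;>
      nlinarith [(hidl a).le, (hslp a).le]
  have hnd := hpar (Pmin x, Etot τ w s p idl wkp shd slp x (Pmin x))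
    ⟨x, Pmin x, hx, hfeas, rfl⟩
  have heq : (Pmin x, Etot τ w s p idl wkp shd slp x (Pmin x)) =
      (Q, Etot τ w s p idl wkp shd slp x Q) := by
    by_contra h
    exact hnd ⟨hle, hE, h⟩
  exact ⟨x, hx, heq.symm⟩
end

section
/- Second inclusion of the Pareto-front theorem: assume A is nonempty, I(a) > 0 and S(a) > 0 for every actor a, and assume every configuration x has a minimal feasible period Pmin(x) (Pmin(x) is feasible for x and every feasible period of x is ≥ Pmin(x)). Define the objective space S = { (P, E(P, x)) : x a configuration, P a feasible period for x } and the explored set EP = { (Pmin(x), E(Pmin(x), x)) : x a configuration }. Then every point of EP that is non-dominated within EP is Pareto-optimal in S. -/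
/-- second inclusion of the Pareto-front theorem — every point of the
explored set `EP` that is non-dominated within `EP` is Pareto-optimal in the objective space `S`. -/
lemma Etot_mono {A : Type*} [Fintype A] (τ w s p idl wkp shd slp : A → ℚ)
    (hidl : ∀ a, 0 < idl a) (hslp : ∀ a, 0 < slp a)
    {x : A → ℚ} (hx : IsConfig x) {P Q : ℚ} (hPQ : P ≤ Q) :
    Etot τ w s p idl wkp shd slp x P ≤ Etot τ w s p idl wkp shd slp x Q := by
  unfold Etot
  apply Finset.sum_le_sum
  intro a _
  rcases hx a with h | h <;> rw [h] <;>
    nlinarith [(hidl a).le, (hslp a).le, mul_le_mul_of_nonneg_left hPQ (hidl a).le,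
      mul_le_mul_of_nonneg_left hPQ (hslp a).le]

/-- main -/
theorem nondominated_explored_is_pareto_optimal
    {A : Type*} [Fintype A] (C : Set (A × A)) (δ : A × A → ℕ)
    (τ w s p idl wkp shd slp : A → ℚ)
    (hτ : ∀ a, 0 ≤ τ a) (hw : ∀ a, 0 ≤ w a) (hs : ∀ a, 0 ≤ s a)
    (hp : ∀ a, 0 ≤ p a) (hwkp : ∀ a, 0 ≤ wkp a) (hshd : ∀ a, 0 ≤ shd a)
    (hne : Nonempty A) (hidl : ∀ a, 0 < idl a) (hslp : ∀ a, 0 < slp a)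
    (Pmin : (A → ℚ) → ℚ)
    (hPmin : ∀ x : A → ℚ, IsConfig x →
      FeasiblePeriod C δ τ w s x (Pmin x) ∧
      ∀ P : ℚ, FeasiblePeriod C δ τ w s x P → Pmin x ≤ P) :
    ∀ pt : ℚ × ℚ,
      ParetoOptimal
        {q : ℚ × ℚ | ∃ y : A → ℚ, IsConfig y ∧
          q = (Pmin y, Etot τ w s p idl wkp shd slp y (Pmin y))}
        pt →
      ParetoOptimal
        {q : ℚ × ℚ | ∃ (y : A → ℚ) (Q : ℚ), IsConfig y ∧
          FeasiblePeriod C δ τ w s y Q ∧ q = (Q, Etot τ w s p idl wkp shd slp y Q)}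
        pt := by
  intro pt hpt
  obtain ⟨hptEP, hND⟩ := hpt
  obtain ⟨y0, hy0, hpt_eq⟩ := hptEP
  constructor
  · exact ⟨y0, Pmin y0, hy0, (hPmin y0 hy0).1, hpt_eq⟩
  · rintro q ⟨y, Q, hy, hQ, rfl⟩ ⟨hle1, hle2, hne'⟩
    have hPQ : Pmin y ≤ Q := (hPmin y hy).2 Q hQ
    have hE := Etot_mono τ w s p idl wkp shd slp hidl hslp hy hPQ
    set r : ℚ × ℚ := (Pmin y, Etot τ w s p idl wkp shd slp y (Pmin y)) with hr
    by_cases hrpt : r = pt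
    · apply hne'
      have h1 : Q ≤ Pmin y := by
        have : pt.1 = Pmin y := by rw [← hrpt]
        simpa [this] using hle1
      have hQP : Q = Pmin y := le_antisymm h1 hPQ
      rw [← hrpt, hr, hQP]
    · exact hND r ⟨y, hy, rfl⟩ ⟨le_trans hPQ hle1, le_trans hE hle2, hrpt⟩
end
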